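/- Fix Q ∈ Γ_n. Then the ratio T(P||Q)/χ²(P||Q) tends to 1/8 as P tends to Q within Γ_n with P ≠ Q, and the ratio I(P||Q)/χ²(P||Q) tends to 1/8 as P tends to Q within Γ_n with P ≠ Q. -/

import Mathlib

open scoped BigOperators
open Filter

/-- Arithmetic-geometric mean divergence. -/
noncomputable def Tdiv {n : ℕ} (P Q : Fin n → ℝ) : ℝ :=
  ∑ i, ((P i + Q i) / 2) * Real.log ((P i + Q i) / (2 * Real.sqrt (P i * Q i)))

/-- Jensen–Shannon divergence. -/
noncomputable def Idiv {n : ℕ} (P Q : Fin n → ℝ) : ℝ :=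
  (1 / 2) * (∑ i, P i * Real.log (2 * P i / (P i + Q i)) +
    ∑ i, Q i * Real.log (2 * Q i / (P i + Q i)))

/-- Chi-square divergence. -/
noncomputable def chiSq {n : ℕ} (P Q : Fin n → ℝ) : ℝ :=
  ∑ i, (P i - Q i) ^ 2 / Q i

open Real Topology

private lemma log_quad' {u : ℝ} (h : |u| ≤ 1/2) :
    |Real.log (1+u) - (u - u^2/2)| ≤ 2 * |u|^3 := by
  have h1 : |(-u)| < 1 := by rw [abs_neg]; linarith
  have := Real.abs_log_sub_add_sum_range_le h1 2
  rw [abs_neg] at this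
  have hs : (∑ i ∈ Finset.range 2, (-u) ^ (i + 1) / (i + 1)) = -u + u^2/2 := by
    simp [Finset.sum_range_succ]; ring
  rw [hs, show (1 : ℝ) - -u = 1 + u by ring] at this
  norm_num at this
  have h2 : |u|^3 / (1 - |u|) ≤ 2 * |u|^3 := by
    rw [div_le_iff₀ (by linarith)]
    nlinarith [mul_nonneg (pow_nonneg (abs_nonneg u) 3) (by linarith : (0:ℝ) ≤ 1 - 2*|u|)]
  calc |Real.log (1+u) - (u - u^2/2)| = |(-u + u^2/2) + Real.log (1+u)| := by
        congr 1; ring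
    _ ≤ |u|^3 / (1 - |u|) := this
    _ ≤ 2 * |u|^3 := h2

private lemma half_abs' : ∀ u : ℝ, |u/2| = |u|/2 := by
  intro u; rw [abs_div]; norm_num

private lemma N_bound' {t : ℝ} (ht : t ≠ 0) (h : |t| ≤ 1/2) :
    |(Real.log (1+t/2) - Real.log (1+t)/2) / t^2 - 1/8| ≤ (5/4) * |t| := by
  set e1 := Real.log (1+t/2) - (t/2 - (t/2)^2/2) with he1def
  set e2 := Real.log (1+t) - (t - t^2/2) with he2def
  have he1 : |e1| ≤ 2 * |t/2|^3 := log_quad' (by rw [half_abs']; linarith)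
  have he2 : |e2| ≤ 2 * |t|^3 := log_quad' h
  rw [half_abs'] at he1
  have ht2 : (0:ℝ) < t^2 := by positivity
  have key : Real.log (1+t/2) - Real.log (1+t)/2 = t^2/8 + (e1 - e2/2) := by
    rw [he1def, he2def]; ring
  rw [key]
  have : (t^2/8 + (e1 - e2/2)) / t^2 - 1/8 = (e1 - e2/2)/t^2 := by
    field_simp; ring
  rw [this, abs_div, abs_of_pos ht2, div_le_iff₀ ht2]
  have habs : |e1 - e2/2| ≤ |e1| + |e2|/2 := by
    calc |e1 - e2/2| ≤ |e1| + |e2/2| := abs_sub e1 (e2/2)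
      _ = |e1| + |e2|/2 := by rw [half_abs']
  have h3 : |t|^3 = |t| * t^2 := by
    rw [pow_succ, sq_abs]; ring
  nlinarith [abs_nonneg t]

private lemma M_bound' {t : ℝ} (ht : t ≠ 0) (h : |t| ≤ 1/2) :
    |((1+t)*Real.log (1+t) - (2+t)*Real.log (1+t/2)) / (2*t^2) - 1/8| ≤ 3 * |t| := by
  set e1 := Real.log (1+t/2) - (t/2 - (t/2)^2/2) with he1def
  set e2 := Real.log (1+t) - (t - t^2/2) with he2def
  have he1 : |e1| ≤ 2 * |t/2|^3 := log_quad' (by rw [half_abs']; linarith)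
  have he2 : |e2| ≤ 2 * |t|^3 := log_quad' h
  rw [half_abs'] at he1
  have ht2 : (0:ℝ) < t^2 := by positivity
  have key : (1+t)*Real.log (1+t) - (2+t)*Real.log (1+t/2)
      = t^2/4 - 3*t^3/8 + ((1+t)*e2 - (2+t)*e1) := by
    rw [he1def, he2def]; ring
  rw [key]
  have : (t^2/4 - 3*t^3/8 + ((1+t)*e2 - (2+t)*e1)) / (2*t^2) - 1/8
      = (-3*t^3/8 + ((1+t)*e2 - (2+t)*e1)) / (2*t^2) := by
    field_simp; ring
  rw [this, abs_div, abs_of_pos (by positivity : (0:ℝ) < 2*t^2), div_le_iff₀ (by positivity)]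
  have ht' := abs_le.mp h
  have h1t : |1+t| ≤ 3/2 := abs_le.mpr ⟨by linarith, by linarith⟩
  have h2t : |2+t| ≤ 5/2 := abs_le.mpr ⟨by linarith, by linarith⟩
  have hb2 : |(1+t)*e2| ≤ (3/2) * (2*|t|^3) := by
    rw [abs_mul]
    exact mul_le_mul h1t he2 (abs_nonneg _) (by norm_num)
  have hb1 : |(2+t)*e1| ≤ (5/2) * (2*(|t|/2)^3) := by
    rw [abs_mul]
    exact mul_le_mul h2t he1 (abs_nonneg _) (by norm_num)
  have hcube : |-3*t^3/8| = 3*|t|^3/8 := by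
    rw [abs_div, abs_mul, abs_pow]; norm_num
  have habs : |(-3*t^3/8 + ((1+t)*e2 - (2+t)*e1))| ≤ |-3*t^3/8| + |(1+t)*e2| + |(2+t)*e1| := by
    calc |(-3*t^3/8 + ((1+t)*e2 - (2+t)*e1))| ≤ |-3*t^3/8| + |(1+t)*e2 - (2+t)*e1| := abs_add_le _ _
      _ ≤ |-3*t^3/8| + (|(1+t)*e2| + |(2+t)*e1|) := by linarith [abs_sub ((1+t)*e2) ((2+t)*e1)]
      _ = _ := by ring
  have h3 : |t|^3 = |t| * t^2 := by rw [pow_succ, sq_abs]; ring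
  rw [hcube] at habs
  nlinarith [abs_nonneg t]

private lemma abs_small' : ∀ᶠ t in 𝓝[≠] (0:ℝ), |t| ≤ 1/2 := by
  have : ∀ᶠ t in 𝓝 (0:ℝ), |t| ≤ 1/2 := by
    have : Metric.ball (0:ℝ) (1/2) ∈ 𝓝 (0:ℝ) := Metric.ball_mem_nhds _ (by norm_num)
    filter_upwards [this] with x hx
    simp only [Metric.mem_ball, Real.dist_eq, sub_zero] at hx
    linarith
  exact this.filter_mono nhdsWithin_le_nhds

private lemma abs_tendsto_zero' (c : ℝ) :
    Tendsto (fun t : ℝ => c * |t|) (𝓝[≠] (0:ℝ)) (𝓝 0) := by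
  have : Tendsto (fun t : ℝ => c * |t|) (𝓝 0) (𝓝 (c * |0|)) :=
    (continuous_const.mul continuous_abs).tendsto 0
  simpa using this.mono_left nhdsWithin_le_nhds

private lemma tendsto_of_bound' {f : ℝ → ℝ} {a c : ℝ}
    (h : ∀ t : ℝ, t ≠ 0 → |t| ≤ 1/2 → |f t - a| ≤ c * |t|) :
    Tendsto f (𝓝[≠] (0:ℝ)) (𝓝 a) := by
  have h0 : Tendsto (fun t => f t - a) (𝓝[≠] (0:ℝ)) (𝓝 0) := by
    apply squeeze_zero_norm' _ (abs_tendsto_zero' c)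
    filter_upwards [abs_small', self_mem_nhdsWithin] with t h1 h2
    exact h t h2 h1
  have := h0.add (tendsto_const_nhds (x := a))
  simpa using this

private lemma N_tendsto' :
    Tendsto (fun t : ℝ => (Real.log (1+t/2) - Real.log (1+t)/2) / t^2)
      (𝓝[≠] (0:ℝ)) (𝓝 (1/8)) :=
  tendsto_of_bound' (fun _ ht h => N_bound' ht h)

private lemma M_tendsto' : Tendsto
    (fun t : ℝ => ((1+t)*Real.log (1+t) - (2+t)*Real.log (1+t/2)) / (2*t^2))
    (𝓝[≠] (0:ℝ)) (𝓝 (1/8)) :=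
  tendsto_of_bound' (fun _ ht h => M_bound' ht h)

private lemma T_term_eq' {y x : ℝ} (hy : 0 < y) (hx : 0 < x) (hne : x ≠ y) :
    ((x+y)/2) * Real.log ((x+y)/(2*Real.sqrt (x*y))) / (x-y)^2
    = (1/y) * ((1 + ((x-y)/y)/2) *
        ((Real.log (1+((x-y)/y)/2) - Real.log (1+(x-y)/y)/2) / ((x-y)/y)^2)) := by
  have hxy : x - y ≠ 0 := sub_ne_zero.mpr hne
  have h1 : 1 + ((x-y)/y)/2 = (x+y)/(2*y) := by field_simp; ring
  have h2 : 1 + (x-y)/y = x/y := by field_simp; ring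
  have hs : Real.sqrt (x*y) ≠ 0 := (Real.sqrt_pos.mpr (by positivity)).ne'
  rw [h1, h2,
      Real.log_div (show x+y ≠ 0 by positivity) (show 2*Real.sqrt (x*y) ≠ 0 by positivity),
      Real.log_div (show x+y ≠ 0 by positivity) (show 2*y ≠ 0 by positivity),
      Real.log_div hx.ne' hy.ne',
      Real.log_mul two_ne_zero hs,
      Real.log_mul two_ne_zero hy.ne',
      Real.log_sqrt (by positivity), Real.log_mul hx.ne' hy.ne']
  field_simp
  ring

private lemma I_term_eq' {y x : ℝ} (hy : 0 < y) (hx : 0 < x) (hne : x ≠ y) :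
    (1/2) * (x * Real.log (2*x/(x+y)) + y * Real.log (2*y/(x+y))) / (x-y)^2
    = (1/y) * (((1+(x-y)/y)*Real.log (1+(x-y)/y) - (2+(x-y)/y)*Real.log (1+((x-y)/y)/2))
        / (2*((x-y)/y)^2)) := by
  have hxy : x - y ≠ 0 := sub_ne_zero.mpr hne
  have h1 : 1 + ((x-y)/y)/2 = (x+y)/(2*y) := by field_simp; ring
  have h2 : 1 + (x-y)/y = x/y := by field_simp; ring
  rw [h1, h2,
      Real.log_div (show 2*x ≠ 0 by positivity) (show x+y ≠ 0 by positivity),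
      Real.log_div (show 2*y ≠ 0 by positivity) (show x+y ≠ 0 by positivity),
      Real.log_div hx.ne' hy.ne',
      Real.log_div (show x+y ≠ 0 by positivity) (show 2*y ≠ 0 by positivity),
      Real.log_mul two_ne_zero hx.ne',
      Real.log_mul two_ne_zero hy.ne']
  field_simp
  ring

private lemma phi_tendsto' {y : ℝ} (hy : 0 < y) :
    Tendsto (fun x => (x-y)/y) (𝓝[≠] y) (𝓝[≠] (0:ℝ)) := by
  apply tendsto_nhdsWithin_of_tendsto_nhds_of_eventually_within
  · have : Tendsto (fun x => (x-y)/y) (𝓝 y) (𝓝 ((y-y)/y)) :=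
      ((continuous_id.sub continuous_const).div_const y).tendsto y
    simpa using this.mono_left nhdsWithin_le_nhds
  · filter_upwards [self_mem_nhdsWithin] with x hx
    simp only [Set.mem_compl_iff, Set.mem_singleton_iff] at hx ⊢
    intro h
    exact hx (by field_simp at h; linarith)

private lemma T_term_tendsto' {y : ℝ} (hy : 0 < y) :
    Tendsto (fun x => ((x+y)/2) * Real.log ((x+y)/(2*Real.sqrt (x*y))) / (x-y)^2)
      (𝓝[≠] y) (𝓝 (1/(8*y))) := by
  have hg : Tendsto (fun t : ℝ =>
      (1/y) * ((1+t/2) * ((Real.log (1+t/2) - Real.log (1+t)/2)/t^2)))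
      (𝓝[≠] (0:ℝ)) (𝓝 ((1/y) * (1 * (1/8)))) := by
    apply Tendsto.const_mul
    apply Tendsto.mul _ N_tendsto'
    have : Tendsto (fun t:ℝ => 1+t/2) (𝓝 (0:ℝ)) (𝓝 (1+0/2)) :=
      (continuous_const.add (continuous_id.div_const 2)).tendsto 0
    simpa using this.mono_left nhdsWithin_le_nhds
  have hcomp := hg.comp (phi_tendsto' hy)
  have hval : (1/y) * (1 * (1/8)) = 1/(8*y) := by field_simp
  rw [hval] at hcomp
  apply Tendsto.congr' _ hcomp
  have hpos : ∀ᶠ x in 𝓝[≠] y, 0 < x :=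
    (eventually_gt_nhds hy).filter_mono nhdsWithin_le_nhds
  filter_upwards [hpos, self_mem_nhdsWithin] with x hx hne
  exact (T_term_eq' hy hx hne).symm

private lemma I_term_tendsto' {y : ℝ} (hy : 0 < y) :
    Tendsto (fun x => (1/2) * (x * Real.log (2*x/(x+y)) + y * Real.log (2*y/(x+y))) / (x-y)^2)
      (𝓝[≠] y) (𝓝 (1/(8*y))) := by
  have hg : Tendsto (fun t : ℝ =>
      (1/y) * (((1+t)*Real.log (1+t) - (2+t)*Real.log (1+t/2)) / (2*t^2)))
      (𝓝[≠] (0:ℝ)) (𝓝 ((1/y) * (1/8))) := Tendsto.const_mul _ M_tendsto'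
  have hcomp := hg.comp (phi_tendsto' hy)
  have hval : (1/y) * (1/8) = 1/(8*y) := by field_simp
  rw [hval] at hcomp
  apply Tendsto.congr' _ hcomp
  have hpos : ∀ᶠ x in 𝓝[≠] y, 0 < x :=
    (eventually_gt_nhds hy).filter_mono nhdsWithin_le_nhds
  filter_upwards [hpos, self_mem_nhdsWithin] with x hx hne
  exact (I_term_eq' hy hx hne).symm

private lemma eventual_bound' {f : ℝ → ℝ} {y : ℝ} (hy : 0 < y)
    (hf : Tendsto (fun x => f x / (x-y)^2) (𝓝[≠] y) (𝓝 (1/(8*y))))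
    (hfy : f y = 0) {ε : ℝ} (hε : 0 < ε) :
    ∀ᶠ x in 𝓝 y, |f x - (x-y)^2/(8*y)| ≤ ε * ((x-y)^2/y) := by
  have h1 : ∀ᶠ x in 𝓝[≠] y, |f x / (x-y)^2 - 1/(8*y)| ≤ ε/y := by
    have := Metric.tendsto_nhds.mp hf (ε/y) (by positivity)
    filter_upwards [this] with x hx
    rw [Real.dist_eq] at hx; exact hx.le
  have hP : ∀ᶠ x in 𝓝[≠] y, |f x - (x-y)^2/(8*y)| ≤ ε * ((x-y)^2/y) := by
    filter_upwards [h1, self_mem_nhdsWithin] with x hx hne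
    simp only [Set.mem_compl_iff, Set.mem_singleton_iff] at hne
    have hne0 : x - y ≠ 0 := sub_ne_zero.mpr hne
    have hsq : (0:ℝ) < (x-y)^2 := lt_of_le_of_ne (sq_nonneg _) (Ne.symm (pow_ne_zero 2 hne0))
    have this := mul_le_mul_of_nonneg_right hx hsq.le
    calc |f x - (x-y)^2/(8*y)| = |f x / (x-y)^2 - 1/(8*y)| * (x-y)^2 := by
          rw [← abs_of_pos hsq, ← abs_mul]; congr 1; rw [abs_of_pos hsq, sub_mul, div_mul_cancel₀ _ hsq.ne']; ring
      _ ≤ ε/y * (x-y)^2 := this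
      _ = ε * ((x-y)^2/y) := by ring
  have h2 := eventually_nhdsWithin_iff.mp hP
  filter_upwards [h2] with x hx
  by_cases hne : x = y
  · subst hne; simp [hfy]
  · exact hx (by simpa using hne)

private lemma assemble' {n : ℕ} (Q : Fin n → ℝ) (hQ : ∀ i, 0 < Q i)
    (term : Fin n → ℝ → ℝ)
    (hterm : ∀ i, Tendsto (fun x => term i x / (x - Q i)^2) (𝓝[≠] (Q i)) (𝓝 (1/(8*Q i))))
    (hterm0 : ∀ i, term i (Q i) = 0)
    (F : (Fin n → ℝ) → ℝ) (hF : ∀ P, F P = ∑ i, term i (P i)) :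
    Tendsto (fun P : Fin n → ℝ => F P / chiSq P Q)
      (nhdsWithin Q {P : Fin n → ℝ | (∀ i, 0 < P i) ∧ (∑ i, P i = 1) ∧ P ≠ Q})
      (𝓝 (1/8)) := by
  rw [Metric.tendsto_nhds]
  intro ε hε
  have hb : ∀ i, ∀ᶠ x in 𝓝 (Q i),
      |term i x - (x - Q i)^2/(8*Q i)| ≤ (ε/2) * ((x - Q i)^2/(Q i)) :=
    fun i => eventual_bound' (hQ i) (hterm i) (hterm0 i) (half_pos hε)
  have hball : ∀ᶠ P : (Fin n → ℝ) in 𝓝 Q, ∀ i,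
      |term i (P i) - (P i - Q i)^2/(8*Q i)| ≤ (ε/2) * ((P i - Q i)^2/(Q i)) := by
    rw [eventually_all]
    intro i
    exact ((continuous_apply i).tendsto Q).eventually (hb i)
  filter_upwards [hball.filter_mono nhdsWithin_le_nhds, self_mem_nhdsWithin] with P hP hPS
  obtain ⟨hPpos, hPsum, hPne⟩ := hPS
  have hne : ∃ i, P i ≠ Q i := by
    by_contra h
    push_neg at h
    exact hPne (funext h)
  obtain ⟨j, hj⟩ := hne
  have hchi_pos : 0 < chiSq P Q := by
    apply Finset.sum_pos' (fun i _ => div_nonneg (sq_nonneg _) (hQ i).le)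
    refine ⟨j, Finset.mem_univ j, ?_⟩
    have : P j - Q j ≠ 0 := sub_ne_zero.mpr hj
    have h2 : 0 < (P j - Q j)^2 := lt_of_le_of_ne (sq_nonneg _) (Ne.symm (pow_ne_zero 2 this))
    exact div_pos h2 (hQ j)
  have hdiff : F P - chiSq P Q / 8 = ∑ i, (term i (P i) - (P i - Q i)^2/(8*Q i)) := by
    rw [hF, chiSq, Finset.sum_div, ← Finset.sum_sub_distrib]
    congr 1 with i
    ring
  have hsum : |F P - chiSq P Q / 8| ≤ (ε/2) * chiSq P Q := by
    rw [hdiff]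
    calc |∑ i, (term i (P i) - (P i - Q i)^2/(8*Q i))|
        ≤ ∑ i, |term i (P i) - (P i - Q i)^2/(8*Q i)| := Finset.abs_sum_le_sum_abs _ _
      _ ≤ ∑ i, (ε/2) * ((P i - Q i)^2/(Q i)) := Finset.sum_le_sum (fun i _ => hP i)
      _ = (ε/2) * chiSq P Q := by rw [chiSq, Finset.mul_sum]
  rw [Real.dist_eq]
  have heq : (fun P : Fin n → ℝ => F P / chiSq P Q) P - 1/8
      = (F P - chiSq P Q/8)/chiSq P Q := by
    field_simp
  rw [heq, abs_div, abs_of_pos hchi_pos]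
  calc |F P - chiSq P Q/8| / chiSq P Q ≤ (ε/2) * chiSq P Q / chiSq P Q :=
        div_le_div_of_nonneg_right hsum hchi_pos.le
    _ = ε/2 := mul_div_cancel_right₀ _ hchi_pos.ne'
    _ < ε := by linarith

/-- For fixed `Q ∈ Γ_n`, both `T(P‖Q)/χ²(P‖Q)` and `I(P‖Q)/χ²(P‖Q)` tend to `1/8`
as `P → Q` within `Γ_n`, `P ≠ Q`. -/
theorem T_I_div_chiSq_tendsto (n : ℕ) (hn : 2 ≤ n)
    (Q : Fin n → ℝ) (hQ : ∀ i, 0 < Q i) (hQ1 : ∑ i, Q i = 1) :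
    Tendsto (fun P : Fin n → ℝ => Tdiv P Q / chiSq P Q)
      (nhdsWithin Q {P : Fin n → ℝ | (∀ i, 0 < P i) ∧ (∑ i, P i = 1) ∧ P ≠ Q})
      (nhds (1 / 8)) ∧
    Tendsto (fun P : Fin n → ℝ => Idiv P Q / chiSq P Q)
      (nhdsWithin Q {P : Fin n → ℝ | (∀ i, 0 < P i) ∧ (∑ i, P i = 1) ∧ P ≠ Q})
      (nhds (1 / 8)) := by
  constructor
  · apply assemble' Q hQ
      (fun i x => ((x + Q i)/2) * Real.log ((x + Q i)/(2*Real.sqrt (x * Q i))))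
      (fun i => T_term_tendsto' (hQ i))
    · intro i
      have h1 : Real.sqrt (Q i * Q i) = Q i := Real.sqrt_mul_self (hQ i).le
      have h2 : (Q i + Q i)/(2 * Q i) = 1 := by
        rw [show Q i + Q i = 2 * Q i from by ring]
        exact div_self (mul_ne_zero two_ne_zero (hQ i).ne')
      simp [h1, h2]
    · intro P
      simp [Tdiv]
  · apply assemble' Q hQ
      (fun i x => (1/2) * (x * Real.log (2*x/(x + Q i)) + Q i * Real.log (2*Q i/(x + Q i))))
      (fun i => I_term_tendsto' (hQ i))
    · intro i
      have h2 : (2 * Q i)/(Q i + Q i) = 1 := by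
        rw [show Q i + Q i = 2 * Q i from by ring]
        exact div_self (mul_ne_zero two_ne_zero (hQ i).ne')
      simp [h2]
    · intro P
      rw [Idiv, ← Finset.sum_add_distrib, Finset.mul_sum]
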